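/- arXiv:2503.17961 — 4 statements merged into one kernel-verified Lean document; each statement's English description precedes it below -/
import Mathlib

section
/- Let V ⊆ ℝ^d be a measurable set of finite Lebesgue measure, let δ > 0, and let f : ℝ^d × ℝ → ℝ be such that: f is continuous on V × [0, δ]; for each x ∈ V the map r ↦ f(x, r) is differentiable on [0, δ] with jointly measurable partial derivative ∂f/∂r; the function x ↦ f(x, 0) is square-integrable on V with A := ∫_V f(x,0)² dx; and ∂f/∂r is square-integrable on V × (0, δ) with P := ∫_{V×(0,δ)} (∂f/∂r)². Then f is square-integrable on V × (0, δ) (with respect to the product of the Lebesgue measures) and ∫_{V×(0,δ)} f² ≤ δ·A + (4/3)·δ^{3/2}·√A·√P + (δ²/2)·P. -/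
/-!
For a.e. `x`, the fundamental theorem of calculus and Cauchy–Schwarz on `(0, r)` give
`|f(x,r)| ≤ |f(x,0)| + √(G x) √r` with `G x = ∫_0^δ f'(x,s)² ds`. Squaring yields a bound
`f(x,0)² + 2 |f(x,0)| √(G x) √r + G x r` whose variables separate, so integrating over
`V × (0, δ)` produces the factors `δ`, `(2/3) δ^{3/2}` and `δ²/2`; a last Cauchy–Schwarz in `x`
bounds `∫ |f(x,0)| √(G x)` by `√A √P`.
-/

open MeasureTheory Set

theorem abs_integral_mul_le_sqrt_mul_sqrt {α : Type*} [MeasurableSpace α] {μ : Measure α}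
    {u v : α → ℝ} (hu : AEStronglyMeasurable u μ) (hv : AEStronglyMeasurable v μ)
    (hu2 : Integrable (fun a => u a ^ 2) μ) (hv2 : Integrable (fun a => v a ^ 2) μ) :
    |∫ a, u a * v a ∂μ| ≤ √(∫ a, u a ^ 2 ∂μ) * √(∫ a, v a ^ 2 ∂μ) := by
  have hpq : Real.HolderConjugate 2 2 := .two_two
  have memLp_abs {w : α → ℝ} (hw : AEStronglyMeasurable w μ)
      (hw2 : Integrable (fun a => w a ^ 2) μ) : MemLp (fun a => |w a|) (ENNReal.ofReal 2) μ := by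
    rw [ENNReal.ofReal_ofNat]
    exact ((memLp_two_iff_integrable_sq hw).2 hw2).abs
  have holder := integral_mul_le_Lp_mul_Lq_of_nonneg hpq (.of_forall fun a => abs_nonneg (u a))
    (.of_forall fun a => abs_nonneg (v a)) (memLp_abs hu hu2) (memLp_abs hv hv2)
  simp only [Real.rpow_two, sq_abs, ← Real.sqrt_eq_rpow] at holder
  calc |∫ a, u a * v a ∂μ| ≤ ∫ a, |u a| * |v a| ∂μ := by
        simpa only [Real.norm_eq_abs, abs_mul] using
          norm_integral_le_integral_norm (fun a => u a * v a)
    _ ≤ _ := holder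

theorem abs_sub_le_sqrt_integral_sq_mul_sqrt {g g' : ℝ → ℝ} {a b : ℝ} (hab : a ≤ b)
    (hg : ContinuousOn g (Icc a b)) (hderiv : ∀ x ∈ Ioo a b, HasDerivAt g (g' x) x)
    (hg'm : AEStronglyMeasurable g' (volume.restrict (Ioc a b)))
    (hg'2 : IntegrableOn (fun x => g' x ^ 2) (Ioc a b)) :
    |g b - g a| ≤ √(∫ x in Ioc a b, g' x ^ 2) * √(b - a) := by
  have hg'int : IntegrableOn g' (Ioc a b) :=
    ((memLp_two_iff_integrable_sq hg'm).2 hg'2).integrable one_le_two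
  rw [← intervalIntegral.integral_eq_sub_of_hasDerivAt_of_le hab hg hderiv
    ((intervalIntegrable_iff_integrableOn_Ioc_of_le hab).2 hg'int),
    intervalIntegral.integral_of_le hab]
  simpa [hab] using abs_integral_mul_le_sqrt_mul_sqrt hg'm aestronglyMeasurable_const hg'2
    (integrable_const ((1 : ℝ) ^ 2))

theorem sq_le_of_hasDerivAt {g g' : ℝ → ℝ} {δ r : ℝ} (hr : r ∈ Ioo 0 δ)
    (hg : ContinuousOn g (Icc 0 δ)) (hderiv : ∀ x ∈ Ioo 0 δ, HasDerivAt g (g' x) x)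
    (hg'm : AEStronglyMeasurable g' (volume.restrict (Ioo 0 δ)))
    (hg'2 : IntegrableOn (fun x => g' x ^ 2) (Ioo 0 δ)) :
    g r ^ 2 ≤ g 0 ^ 2 + 2 * |g 0| * √(∫ x in Ioo 0 δ, g' x ^ 2) * √r
      + (∫ x in Ioo 0 δ, g' x ^ 2) * r := by
  set G := ∫ x in Ioo 0 δ, g' x ^ 2
  have hsub : Ioc 0 r ⊆ Ioo 0 δ := Ioc_subset_Ioo_right hr.2
  have hGr : ∫ x in Ioc 0 r, g' x ^ 2 ≤ G :=
    setIntegral_mono_set hg'2 (.of_forall fun x => sq_nonneg _) hsub.eventuallyLE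
  have hincr : |g r - g 0| ≤ √G * √r := by
    refine (abs_sub_le_sqrt_integral_sq_mul_sqrt hr.1.le (hg.mono (Icc_subset_Icc_right hr.2.le))
      (fun x hx => hderiv x ⟨hx.1, hx.2.trans hr.2⟩) (hg'm.mono_set hsub)
      (hg'2.mono_set hsub)).trans ?_
    rw [sub_zero]
    gcongr
  have habs : |g r| ≤ |g 0| + √G * √r := by
    have := abs_sub_abs_le_abs_sub (g r) (g 0)
    linarith
  have hG : 0 ≤ G := setIntegral_nonneg measurableSet_Ioo fun x _ => sq_nonneg _
  calc g r ^ 2 = |g r| ^ 2 := (sq_abs _).symm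
    _ ≤ (|g 0| + √G * √r) ^ 2 := by gcongr
    _ = _ := by
      rw [add_sq, mul_pow, Real.sq_sqrt hG, Real.sq_sqrt hr.1.le, sq_abs]
      ring

theorem integral_Ioo_sqrt {δ : ℝ} (hδ : 0 ≤ δ) :
    ∫ r in Ioo 0 δ, √r = 2 / 3 * δ ^ ((3 : ℝ) / 2) := by
  rw [← integral_Ioc_eq_integral_Ioo, ← intervalIntegral.integral_of_le hδ]
  simp only [Real.sqrt_eq_rpow]
  rw [integral_rpow (Or.inl (by norm_num)), Real.zero_rpow (by norm_num)]
  norm_num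
  ring

theorem integral_Ioo_id {δ : ℝ} (hδ : 0 ≤ δ) : ∫ r in Ioo 0 δ, r = δ ^ 2 / 2 := by
  rw [← integral_Ioc_eq_integral_Ioo, ← intervalIntegral.integral_of_le hδ, integral_id]
  ring

section Collar

variable {α : Type*} [MeasurableSpace α] {μ : Measure α} {δ : ℝ} {a b c : α → ℝ}

theorem integrable_prod_Ioo_add_mul_sqrt_add_mul (ha : Integrable a μ) (hb : Integrable b μ)
    (hc : Integrable c μ) :
    Integrable (fun p : α × ℝ => a p.1 + b p.1 * √p.2 + c p.1 * p.2)
      (μ.prod (volume.restrict (Ioo 0 δ))) := by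
  have hsqrt : IntegrableOn (fun r : ℝ => √r) (Ioo 0 δ) :=
    Real.continuous_sqrt.integrableOn_Icc.mono_set Ioo_subset_Icc_self
  have hid : IntegrableOn (fun r : ℝ => r) (Ioo 0 δ) :=
    continuous_id.integrableOn_Icc.mono_set Ioo_subset_Icc_self
  refine ((?_ : Integrable _ _).add (hb.mul_prod hsqrt)).add (hc.mul_prod hid)
  simpa using ha.mul_prod (integrable_const (1 : ℝ))

theorem integral_prod_Ioo_add_mul_sqrt_add_mul [SFinite μ] (hδ : 0 ≤ δ) (ha : Integrable a μ)
    (hb : Integrable b μ) (hc : Integrable c μ) :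
    ∫ p, a p.1 + b p.1 * √p.2 + c p.1 * p.2 ∂(μ.prod (volume.restrict (Ioo 0 δ))) =
      δ * ∫ x, a x ∂μ + 2 / 3 * δ ^ ((3 : ℝ) / 2) * ∫ x, b x ∂μ + δ ^ 2 / 2 * ∫ x, c x ∂μ := by
  have hsqrt : IntegrableOn (fun r : ℝ => √r) (Ioo 0 δ) :=
    Real.continuous_sqrt.integrableOn_Icc.mono_set Ioo_subset_Icc_self
  have hid : IntegrableOn (fun r : ℝ => r) (Ioo 0 δ) :=
    continuous_id.integrableOn_Icc.mono_set Ioo_subset_Icc_self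
  have ha' : Integrable (fun p : α × ℝ => a p.1) (μ.prod (volume.restrict (Ioo 0 δ))) :=
    ha.comp_fst _
  rw [integral_add (f := fun p => a p.1 + b p.1 * √p.2) (ha'.add (hb.mul_prod hsqrt))
      (hc.mul_prod hid),
    integral_add ha' (hb.mul_prod hsqrt), integral_fun_fst, integral_prod_mul,
    integral_prod_mul c (fun r => r), integral_Ioo_sqrt hδ, integral_Ioo_id hδ]
  simp only [measureReal_restrict_apply MeasurableSet.univ, univ_inter, Real.volume_real_Ioo,
    sub_zero, max_eq_left hδ, smul_eq_mul]
  ring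

variable [SFinite μ] {f f' : α × ℝ → ℝ}

theorem ae_sq_le_prod_Ioo
    (hslice : ∀ᵐ x ∂μ, ContinuousOn (fun r => f (x, r)) (Icc 0 δ) ∧
      ∀ r ∈ Ioo 0 δ, HasDerivAt (fun s => f (x, s)) (f' (x, r)) r)
    (hf' : Measurable f')
    (hP : Integrable (fun p => f' p ^ 2) (μ.prod (volume.restrict (Ioo 0 δ)))) :
    ∀ᵐ p ∂(μ.prod (volume.restrict (Ioo 0 δ))), f p ^ 2 ≤
      f (p.1, 0) ^ 2 + 2 * |f (p.1, 0)| * √(∫ r in Ioo 0 δ, f' (p.1, r) ^ 2) * √p.2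
        + (∫ r in Ioo 0 δ, f' (p.1, r) ^ 2) * p.2 := by
  have hslices : ∀ᵐ x ∂μ, ∀ r ∈ Ioo 0 δ, f (x, r) ^ 2 ≤
      f (x, 0) ^ 2 + 2 * |f (x, 0)| * √(∫ r in Ioo 0 δ, f' (x, r) ^ 2) * √r
        + (∫ r in Ioo 0 δ, f' (x, r) ^ 2) * r := by
    filter_upwards [hslice, hP.prod_right_ae] with x ⟨hcont, hderiv⟩ hx r hr
    exact sq_le_of_hasDerivAt hr hcont hderiv
      (hf'.comp measurable_prodMk_left).aestronglyMeasurable hx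
  filter_upwards [Measure.quasiMeasurePreserving_fst.ae hslices,
    Measure.quasiMeasurePreserving_snd.ae (ae_restrict_mem measurableSet_Ioo)] with p hp hp2
  exact hp p.2 hp2

theorem integrable_sq_and_integral_sq_le_of_hasDerivAt (hδ : 0 ≤ δ)
    (hf : AEStronglyMeasurable f (μ.prod (volume.restrict (Ioo 0 δ))))
    (hslice : ∀ᵐ x ∂μ, ContinuousOn (fun r => f (x, r)) (Icc 0 δ) ∧
      ∀ r ∈ Ioo 0 δ, HasDerivAt (fun s => f (x, s)) (f' (x, r)) r)
    (hf' : Measurable f') (hA : Integrable (fun x => f (x, 0) ^ 2) μ)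
    (hP : Integrable (fun p => f' p ^ 2) (μ.prod (volume.restrict (Ioo 0 δ)))) :
    Integrable (fun p => f p ^ 2) (μ.prod (volume.restrict (Ioo 0 δ))) ∧
    ∫ p, f p ^ 2 ∂(μ.prod (volume.restrict (Ioo 0 δ))) ≤
      δ * ∫ x, f (x, 0) ^ 2 ∂μ
      + 4 / 3 * δ ^ ((3 : ℝ) / 2) * √(∫ x, f (x, 0) ^ 2 ∂μ)
          * √(∫ p, f' p ^ 2 ∂(μ.prod (volume.restrict (Ioo 0 δ))))
      + δ ^ 2 / 2 * ∫ p, f' p ^ 2 ∂(μ.prod (volume.restrict (Ioo 0 δ))) := by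
  set G := fun x => ∫ r in Ioo 0 δ, f' (x, r) ^ 2
  have hG : Integrable G μ := hP.integral_prod_left
  have hG0 : ∀ x, 0 ≤ G x := fun x => setIntegral_nonneg measurableSet_Ioo fun _ _ => sq_nonneg _
  have hGP : ∫ x, G x ∂μ = ∫ p, f' p ^ 2 ∂(μ.prod (volume.restrict (Ioo 0 δ))) :=
    (integral_prod _ hP).symm
  have habs : AEStronglyMeasurable (fun x => |f (x, 0)|) μ := by
    simpa only [Real.sqrt_sq_eq_abs] using hA.1.aemeasurable.sqrt.aestronglyMeasurable
  have hsqrtG : AEStronglyMeasurable (fun x => √(G x)) μ :=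
    hG.1.aemeasurable.sqrt.aestronglyMeasurable
  -- `2 |a| √G ≤ a ^ 2 + G` makes the cross term integrable
  have hcross : Integrable (fun x => 2 * |f (x, 0)| * √(G x)) μ := by
    refine (hA.add hG).mono' ((habs.const_mul 2).mul hsqrtG) (.of_forall fun x => ?_)
    rw [Real.norm_of_nonneg (by positivity)]
    show 2 * |f (x, 0)| * √(G x) ≤ f (x, 0) ^ 2 + G x
    nlinarith [sq_nonneg (|f (x, 0)| - √(G x)), sq_abs (f (x, 0)), Real.sq_sqrt (hG0 x)]
  have hB := integrable_prod_Ioo_add_mul_sqrt_add_mul (δ := δ) hA hcross hG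
  have hbound := ae_sq_le_prod_Ioo hslice hf' hP
  have hint : Integrable (fun p => f p ^ 2) (μ.prod (volume.restrict (Ioo 0 δ))) :=
    hB.mono' (hf.pow 2) (hbound.mono fun p hp => by rwa [Real.norm_of_nonneg (sq_nonneg _)])
  refine ⟨hint, ?_⟩
  have hcs : ∫ x, 2 * |f (x, 0)| * √(G x) ∂μ
      ≤ 2 * (√(∫ x, f (x, 0) ^ 2 ∂μ) * √(∫ x, G x ∂μ)) := by
    simp_rw [mul_assoc]
    rw [integral_const_mul]
    gcongr
    refine (le_abs_self _).trans ?_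
    have := abs_integral_mul_le_sqrt_mul_sqrt habs hsqrtG (by simpa only [sq_abs] using hA)
      (hG.congr (.of_forall fun x => (Real.sq_sqrt (hG0 x)).symm))
    simpa only [sq_abs, Real.sq_sqrt (hG0 _)] using this
  calc ∫ p, f p ^ 2 ∂(μ.prod (volume.restrict (Ioo 0 δ)))
      ≤ ∫ p, f (p.1, 0) ^ 2 + 2 * |f (p.1, 0)| * √(G p.1) * √p.2 + G p.1 * p.2
          ∂(μ.prod (volume.restrict (Ioo 0 δ))) := integral_mono_ae hint hB hbound
    _ = δ * ∫ x, f (x, 0) ^ 2 ∂μ + 2 / 3 * δ ^ ((3 : ℝ) / 2) * ∫ x, 2 * |f (x, 0)| * √(G x) ∂μ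
          + δ ^ 2 / 2 * ∫ x, G x ∂μ := integral_prod_Ioo_add_mul_sqrt_add_mul hδ hA hcross hG
    _ ≤ δ * ∫ x, f (x, 0) ^ 2 ∂μ
          + 2 / 3 * δ ^ ((3 : ℝ) / 2) * (2 * (√(∫ x, f (x, 0) ^ 2 ∂μ) * √(∫ x, G x ∂μ)))
          + δ ^ 2 / 2 * ∫ x, G x ∂μ := by gcongr
    _ = _ := by rw [hGP]; ring

end Collar

theorem collar_sq_integral_bound_general
    (d : ℕ) (V : Set (EuclideanSpace ℝ (Fin d))) (hV : MeasurableSet V)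
    (δ : ℝ) (hδ : 0 < δ)
    (f f' : EuclideanSpace ℝ (Fin d) × ℝ → ℝ)
    (hfc : ContinuousOn f (V ×ˢ Icc 0 δ))
    (hderiv : ∀ x ∈ V, ∀ r ∈ Icc (0:ℝ) δ,
      HasDerivWithinAt (fun s => f (x, s)) (f' (x, r)) (Icc 0 δ) r)
    (hf'meas : Measurable f')
    (hA : Integrable (fun x => (f (x, 0)) ^ 2) (volume.restrict V))
    (hP : Integrable (fun p => (f' p) ^ 2)
      ((volume.restrict V).prod (volume.restrict (Ioo 0 δ)))) :
    Integrable (fun p => (f p) ^ 2)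
      ((volume.restrict V).prod (volume.restrict (Ioo 0 δ))) ∧
    (∫ p, (f p) ^ 2 ∂((volume.restrict V).prod (volume.restrict (Ioo 0 δ)))) ≤
      δ * (∫ x in V, (f (x, 0)) ^ 2)
      + (4 / 3) * δ ^ ((3:ℝ) / 2) * Real.sqrt (∫ x in V, (f (x, 0)) ^ 2)
          * Real.sqrt (∫ p, (f' p) ^ 2
              ∂((volume.restrict V).prod (volume.restrict (Ioo 0 δ))))
      + (δ ^ 2 / 2) * (∫ p, (f' p) ^ 2
          ∂((volume.restrict V).prod (volume.restrict (Ioo 0 δ)))) := by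
  have hf : AEStronglyMeasurable f ((volume.restrict V).prod (volume.restrict (Ioo 0 δ))) := by
    rw [Measure.prod_restrict]
    exact (hfc.mono (prod_mono subset_rfl Ioo_subset_Icc_self)).aestronglyMeasurable
      (hV.prod measurableSet_Ioo)
  have hslice : ∀ᵐ x ∂(volume.restrict V), ContinuousOn (fun r => f (x, r)) (Icc 0 δ) ∧
      ∀ r ∈ Ioo 0 δ, HasDerivAt (fun s => f (x, s)) (f' (x, r)) r := by
    filter_upwards [ae_restrict_mem hV] with x hx
    exact ⟨hfc.comp (Continuous.continuousOn (by fun_prop)) fun r hr => ⟨hx, hr⟩,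
      fun r hr => (hderiv x hx r (Ioo_subset_Icc_self hr)).hasDerivAt (Icc_mem_nhds hr.1 hr.2)⟩
  exact integrable_sq_and_integral_sq_le_of_hasDerivAt hδ.le hf hslice hf'meas hA hP

/-- The tubular-neighborhood estimate (3.7)/(3.14) in Step 5 of the proof of Lemma 3.1:
for `f` continuous on `V × [0,δ]` with partial derivative `∂f/∂r = f'` on `[0,δ]`,
square-integrable boundary values `f(·,0)` on `V` and square-integrable `f'` on
`V × (0,δ)`, the function `f` is square-integrable on `V × (0,δ)` and
`∫ f² ≤ δ·A + (4/3)·δ^{3/2}·√A·√P + (δ²/2)·P`, where `A = ∫_V f(·,0)²` and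
`P = ∫_{V×(0,δ)} f'²`. -/
theorem collar_sq_integral_bound
    (d : ℕ) (V : Set (EuclideanSpace ℝ (Fin d))) (hV : MeasurableSet V)
    (hVfin : volume V < ⊤) (δ : ℝ) (hδ : 0 < δ)
    (f f' : EuclideanSpace ℝ (Fin d) × ℝ → ℝ)
    (hfc : ContinuousOn f (V ×ˢ Icc 0 δ))
    (hderiv : ∀ x ∈ V, ∀ r ∈ Icc (0:ℝ) δ,
      HasDerivWithinAt (fun s => f (x, s)) (f' (x, r)) (Icc 0 δ) r)
    (hf'meas : Measurable f')
    (hA : Integrable (fun x => (f (x, 0)) ^ 2) (volume.restrict V))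
    (hP : Integrable (fun p => (f' p) ^ 2)
      ((volume.restrict V).prod (volume.restrict (Ioo 0 δ)))) :
    Integrable (fun p => (f p) ^ 2)
      ((volume.restrict V).prod (volume.restrict (Ioo 0 δ))) ∧
    (∫ p, (f p) ^ 2 ∂((volume.restrict V).prod (volume.restrict (Ioo 0 δ)))) ≤
      δ * (∫ x in V, (f (x, 0)) ^ 2)
      + (4 / 3) * δ ^ ((3:ℝ) / 2) * Real.sqrt (∫ x in V, (f (x, 0)) ^ 2)
          * Real.sqrt (∫ p, (f' p) ^ 2
              ∂((volume.restrict V).prod (volume.restrict (Ioo 0 δ))))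
      + (δ ^ 2 / 2) * (∫ p, (f' p) ^ 2
          ∂((volume.restrict V).prod (volume.restrict (Ioo 0 δ)))) :=
  collar_sq_integral_bound_general d V hV δ hδ f f' hfc hderiv hf'meas hA hP
end

section
/- Let V ⊆ ℝ^d be a measurable set of finite Lebesgue measure, let δ > 0, and let f : ℝ^d × ℝ → ℝ be such that: f is continuous on V × [0, δ]; for each x ∈ V the map r ↦ f(x, r) is differentiable on [0, δ] with jointly measurable partial derivative ∂f/∂r; f is square-integrable on V × (0, δ); and ∂f/∂r is square-integrable on V × (0, δ). Then the boundary trace is controlled by the W^{1,2}-data: ∫_V f(x,0)² dx ≤ (1/δ)·∫_{V×(0,δ)} f² + 2·(∫_{V×(0,δ)} f²)^{1/2}·(∫_{V×(0,δ)} (∂f/∂r)²)^{1/2}. -/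
open MeasureTheory Set

/-! Along each fibre `r ↦ f (x, r)`, the fundamental theorem of calculus applied to `f²` gives
`f(x,0)² ≤ f(x,r)² + 2 ∫₀^δ |f ∂ᵣf|` for every `r ∈ (0,δ)`; averaging over `r` bounds `f(x,0)²`
by `δ⁻¹ ∫₀^δ f² + 2 ∫₀^δ |f ∂ᵣf|`. Integrating over `x ∈ V` (Fubini) and applying Cauchy–Schwarz
to `∫ |f ∂ᵣf|` gives the estimate. -/

theorem sq_le_sq_add_two_integral_abs_mul {a b : ℝ} (hab : a ≤ b) {g g' : ℝ → ℝ}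
    (hg : ContinuousOn g (Icc a b)) (hderiv : ∀ r ∈ Ioo a b, HasDerivAt g (g' r) r)
    (hint : IntegrableOn (fun s => g s * g' s) (Ioc a b)) :
    g a ^ 2 ≤ g b ^ 2 + 2 * ∫ s in Ioc a b, |g s * g' s| := by
  have hftc : ∫ s in a..b, 2 * (g s * g' s) = g b ^ 2 - g a ^ 2 := by
    refine intervalIntegral.integral_eq_sub_of_hasDerivAt_of_le hab (hg.pow 2)
      (fun r hr => ((hderiv r hr).pow 2).congr_deriv (by ring)) ?_
    exact (intervalIntegrable_iff_integrableOn_Ioc_of_le hab).2 (hint.const_mul 2)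
  have habs : |∫ s in a..b, 2 * (g s * g' s)| ≤ 2 * ∫ s in Ioc a b, |g s * g' s| := by
    calc |∫ s in a..b, 2 * (g s * g' s)| ≤ ∫ s in a..b, |2 * (g s * g' s)| :=
          intervalIntegral.abs_integral_le_integral_abs hab
      _ = 2 * ∫ s in Ioc a b, |g s * g' s| := by
          simp only [abs_mul, abs_two, intervalIntegral.integral_of_le hab, integral_const_mul]
  linarith [neg_abs_le (∫ s in a..b, 2 * (g s * g' s))]

theorem sq_le_inv_mul_integral_sq_add {a b : ℝ} (hab : a < b) {g g' : ℝ → ℝ}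
    (hg : ContinuousOn g (Icc a b)) (hderiv : ∀ r ∈ Ioo a b, HasDerivAt g (g' r) r)
    (hint : IntegrableOn (fun s => g s * g' s) (Ioo a b)) :
    g a ^ 2 ≤ (1 / (b - a)) * (∫ r in Ioo a b, g r ^ 2)
      + 2 * ∫ s in Ioo a b, |g s * g' s| := by
  set I := ∫ s in Ioo a b, |g s * g' s|
  have hpoint : ∀ r ∈ Ioo a b, g a ^ 2 - 2 * I ≤ g r ^ 2 := by
    intro r hr
    have hsub : Ioc a r ⊆ Ioo a b := Ioc_subset_Ioo_right hr.2
    have hmono : ∫ s in Ioc a r, |g s * g' s| ≤ I :=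
      setIntegral_mono_set hint.abs (Filter.Eventually.of_forall fun _ => abs_nonneg _)
        hsub.eventuallyLE
    have := sq_le_sq_add_two_integral_abs_mul hr.1.le
      (hg.mono (Icc_subset_Icc_right hr.2.le))
      (fun t ht => hderiv t ⟨ht.1, ht.2.trans hr.2⟩) (hint.mono_set hsub)
    linarith
  have havg : (g a ^ 2 - 2 * I) * (b - a) ≤ ∫ r in Ioo a b, g r ^ 2 := by
    simpa [Real.volume_real_Ioo_of_le hab.le] using
      setIntegral_ge_of_const_le_real (μ := volume) measurableSet_Ioo measure_Ioo_lt_top.ne hpoint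
        (((hg.pow 2).integrableOn_Icc).mono_set Ioo_subset_Icc_self)
  rwa [div_mul_eq_mul_div, one_mul, ← sub_le_iff_le_add, le_div_iff₀ (sub_pos.2 hab)]

theorem integral_abs_mul_le_sqrt_mul_sqrt {α : Type*} [MeasurableSpace α] {μ : Measure α}
    {f g : α → ℝ} (hf : MemLp f 2 μ) (hg : MemLp g 2 μ) :
    ∫ a, |f a * g a| ∂μ ≤ √(∫ a, f a ^ 2 ∂μ) * √(∫ a, g a ^ 2 ∂μ) := by
  have key := integral_mul_norm_le_Lp_mul_Lq Real.HolderConjugate.two_two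
    (by simpa using hf) (by simpa using hg)
  simpa [Real.sqrt_eq_rpow, abs_mul] using key

theorem trace_sq_integral_bound_general
    (d : ℕ) (V : Set (EuclideanSpace ℝ (Fin d))) (hV : MeasurableSet V)
    (δ : ℝ) (hδ : 0 < δ)
    (f f' : EuclideanSpace ℝ (Fin d) × ℝ → ℝ)
    (hfc : ContinuousOn f (V ×ˢ Icc 0 δ))
    (hderiv : ∀ x ∈ V, ∀ r ∈ Icc (0:ℝ) δ,
      HasDerivWithinAt (fun s => f (x, s)) (f' (x, r)) (Icc 0 δ) r)
    (hf'meas : Measurable f')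
    (hf2 : Integrable (fun p => (f p) ^ 2)
      ((volume.restrict V).prod (volume.restrict (Ioo 0 δ))))
    (hf'2 : Integrable (fun p => (f' p) ^ 2)
      ((volume.restrict V).prod (volume.restrict (Ioo 0 δ)))) :
    (∫ x in V, (f (x, 0)) ^ 2) ≤
      (1 / δ) * (∫ p, (f p) ^ 2
          ∂((volume.restrict V).prod (volume.restrict (Ioo 0 δ))))
      + 2 * Real.sqrt (∫ p, (f p) ^ 2
            ∂((volume.restrict V).prod (volume.restrict (Ioo 0 δ))))
          * Real.sqrt (∫ p, (f' p) ^ 2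
            ∂((volume.restrict V).prod (volume.restrict (Ioo 0 δ)))) := by
  set μ := (volume.restrict V).prod (volume.restrict (Ioo (0:ℝ) δ))
  have hfmeas : AEStronglyMeasurable f μ := by
    rw [show μ = _ from Measure.prod_restrict V (Ioo 0 δ)]
    exact (hfc.mono (prod_mono_right Ioo_subset_Icc_self)).aestronglyMeasurable
      (hV.prod measurableSet_Ioo)
  have hfL2 : MemLp f 2 μ := (memLp_two_iff_integrable_sq hfmeas).2 hf2
  have hf'L2 : MemLp f' 2 μ :=
    (memLp_two_iff_integrable_sq hf'meas.aestronglyMeasurable).2 hf'2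
  have hprod : Integrable (fun p => |f p * f' p|) μ := (hfL2.integrable_mul hf'L2).abs
  have hfibre : ∀ᵐ x ∂(volume.restrict V), f (x, 0) ^ 2 ≤
      (1 / δ) * (∫ r in Ioo 0 δ, f (x, r) ^ 2) + 2 * ∫ r in Ioo 0 δ, |f (x, r) * f' (x, r)| := by
    filter_upwards [(hfL2.integrable_mul hf'L2).prod_right_ae, ae_restrict_mem hV] with x hint hx
    simpa only [sub_zero, Function.comp_def] using sq_le_inv_mul_integral_sq_add hδ
      (hfc.comp (Continuous.prodMk_right x).continuousOn fun r hr => ⟨hx, hr⟩)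
      (fun r hr => (hderiv x hx r (Ioo_subset_Icc_self hr)).hasDerivAt (Icc_mem_nhds hr.1 hr.2))
      hint
  calc (∫ x in V, f (x, 0) ^ 2)
      ≤ ∫ x in V, ((1 / δ) * (∫ r in Ioo 0 δ, f (x, r) ^ 2)
          + 2 * ∫ r in Ioo 0 δ, |f (x, r) * f' (x, r)|) :=
        integral_mono_of_nonneg (Filter.Eventually.of_forall fun _ => sq_nonneg _)
          ((hf2.integral_prod_left.const_mul _).add (hprod.integral_prod_left.const_mul _)) hfibre
    _ = (1 / δ) * (∫ p, f p ^ 2 ∂μ) + 2 * ∫ p, |f p * f' p| ∂μ := by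
        rw [integral_add (hf2.integral_prod_left.const_mul _)
            (hprod.integral_prod_left.const_mul _), integral_const_mul, integral_const_mul,
          integral_prod _ hf2, integral_prod _ hprod]
    _ ≤ _ := by
        rw [mul_assoc 2]
        gcongr
        exact integral_abs_mul_le_sqrt_mul_sqrt hfL2 hf'L2

/-- The local boundary (trace) estimate used in Step 2 of the proof of the trace theorem
(Theorem 3.1): for `f` continuous on `V × [0,δ]` with partial derivative `∂f/∂r = f'`,
with `f` and `f'` square-integrable on the collar `V × (0,δ)`, the boundary values satisfy
`∫_V f(·,0)² ≤ (1/δ)·∫ f² + 2·(∫ f²)^{1/2}·(∫ f'²)^{1/2}`. -/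
theorem trace_sq_integral_bound
    (d : ℕ) (V : Set (EuclideanSpace ℝ (Fin d))) (hV : MeasurableSet V)
    (hVfin : volume V < ⊤) (δ : ℝ) (hδ : 0 < δ)
    (f f' : EuclideanSpace ℝ (Fin d) × ℝ → ℝ)
    (hfc : ContinuousOn f (V ×ˢ Icc 0 δ))
    (hderiv : ∀ x ∈ V, ∀ r ∈ Icc (0:ℝ) δ,
      HasDerivWithinAt (fun s => f (x, s)) (f' (x, r)) (Icc 0 δ) r)
    (hf'meas : Measurable f')
    (hf2 : Integrable (fun p => (f p) ^ 2)
      ((volume.restrict V).prod (volume.restrict (Ioo 0 δ))))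
    (hf'2 : Integrable (fun p => (f' p) ^ 2)
      ((volume.restrict V).prod (volume.restrict (Ioo 0 δ)))) :
    (∫ x in V, (f (x, 0)) ^ 2) ≤
      (1 / δ) * (∫ p, (f p) ^ 2
          ∂((volume.restrict V).prod (volume.restrict (Ioo 0 δ))))
      + 2 * Real.sqrt (∫ p, (f p) ^ 2
            ∂((volume.restrict V).prod (volume.restrict (Ioo 0 δ))))
          * Real.sqrt (∫ p, (f' p) ^ 2
            ∂((volume.restrict V).prod (volume.restrict (Ioo 0 δ)))) :=
  trace_sq_integral_bound_general d V hV δ hδ f f' hfc hderiv hf'meas hf2 hf'2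
end

section
/- (Left-continuity of min-max eigenvalues along a monotone family with dense union; core of Theorem 4.1.) Let E be a real normed vector space, let b₀ and B be continuous symmetric bilinear forms on E with b₀ positive definite (b₀(u,u) > 0 for u ≠ 0), and assume there is γ ∈ ℝ with B(u,u) ≥ γ·b₀(u,u) for all u ∈ E. For an integer k ≥ 1 and a submodule W of E define λ_k(W) := sInf { S ∈ ℝ | ∃ a submodule V of E with V ≤ W, finrank ℝ V = k, and S = sSup { B(u,u) | u ∈ V, b₀(u,u) = 1 } }. Let t ∈ ℝ and let (H_s)_{s ∈ ℝ} be a family of submodules of E that is monotone (s ≤ s′ implies H_s ≤ H_{s′}) and satisfies the density condition: H_t is contained in the topological closure of ⋃_{s < t} H_s. If H_t contains a submodule of finite rank k, then for every ε > 0 there exists s < t with λ_k(H_s) < λ_k(H_t) + ε. -/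
open Filter Topology

/-- The `k`-th min-max eigenvalue (formula (1.7)) of the bilinear form `B` relative to the
positive form `b₀`, restricted to a subspace `W`: the infimum over `k`-dimensional subspaces
`V ≤ W` of the supremum of `B(u,u)` over the `b₀`-unit sphere of `V`. -/
noncomputable def minmaxEigenvalue {E : Type*} [NormedAddCommGroup E] [NormedSpace ℝ E]
    (b₀ B : E →L[ℝ] E →L[ℝ] ℝ) (k : ℕ) (W : Submodule ℝ E) : ℝ :=
  sInf { S : ℝ | ∃ V : Submodule ℝ E, V ≤ W ∧ Module.finrank ℝ V = k ∧
    S = sSup { r : ℝ | ∃ u : E, u ∈ V ∧ b₀ u u = 1 ∧ r = B u u } }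

/-
Choose a `k`-dimensional `V ≤ H t` whose Rayleigh supremum `c` is within `ε / 2` of `λ_k(H t)`.
Approximating a basis of `V` by vectors of the directed union of the `H s`, `s < t`, shows that the
inclusion `V → E` is a limit of linear maps `T` with range in a single `H s`. A map `T` close to the
inclusion is injective, and since `b₀` is coercive on the finite-dimensional `V`, the bound
`B v v ≤ c b₀ v v` on `V` degrades only to `B x x ≤ (c + ε / 2) b₀ x x` on `range T`. So `range T`
is a `k`-dimensional subspace of `H s` witnessing `λ_k(H s) ≤ c + ε / 2`.
-/

section

variable {E : Type*} [NormedAddCommGroup E] [NormedSpace ℝ E]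

theorem ContinuousLinearMap.apply_self_sub_apply_self_le (Q : E →L[ℝ] E →L[ℝ] ℝ) (x y : E) :
    Q x x - Q y y ≤ ‖Q‖ * (‖x‖ + ‖y‖) * ‖x - y‖ := by
  have hsplit : Q x x - Q y y = Q x (x - y) + Q (x - y) y := by
    simp only [map_sub, sub_apply]; ring
  calc Q x x - Q y y ≤ |Q x (x - y)| + |Q (x - y) y| :=
        hsplit ▸ (le_abs_self _).trans (abs_add_le _ _)
    _ ≤ ‖Q‖ * ‖x‖ * ‖x - y‖ + ‖Q‖ * ‖x - y‖ * ‖y‖ :=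
        add_le_add (Q.le_opNorm₂ _ _) (Q.le_opNorm₂ _ _)
    _ = ‖Q‖ * (‖x‖ + ‖y‖) * ‖x - y‖ := by ring

theorem ContinuousLinearMap.apply_self_le_of_norm_sub_le (Q : E →L[ℝ] E →L[ℝ] ℝ) {η : ℝ}
    (hη : η ≤ 1) {x y : E} (h : ‖x - y‖ ≤ η * ‖y‖) :
    Q x x ≤ Q y y + 3 * η * ‖Q‖ * ‖y‖ ^ 2 := by
  have hx : ‖x‖ + ‖y‖ ≤ 3 * ‖y‖ := by
    nlinarith [norm_le_norm_add_norm_sub' x y, norm_nonneg y]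
  calc Q x x ≤ Q y y + ‖Q‖ * (‖x‖ + ‖y‖) * ‖x - y‖ := by
        linarith [Q.apply_self_sub_apply_self_le x y]
    _ ≤ Q y y + ‖Q‖ * (3 * ‖y‖) * (η * ‖y‖) := by gcongr
    _ = Q y y + 3 * η * ‖Q‖ * ‖y‖ ^ 2 := by ring

theorem Submodule.exists_pos_mul_norm_sq_le (b : E →L[ℝ] E →L[ℝ] ℝ)
    (hb : ∀ u : E, u ≠ 0 → 0 < b u u) (V : Submodule ℝ E) [FiniteDimensional ℝ V] :
    ∃ m > 0, ∀ v ∈ V, m * ‖v‖ ^ 2 ≤ b v v := by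
  rcases subsingleton_or_nontrivial V with hV | hV
  · refine ⟨1, one_pos, fun v hv => ?_⟩
    obtain rfl : v = 0 := congrArg Subtype.val (Subsingleton.elim (⟨v, hv⟩ : V) 0)
    simp
  obtain ⟨u, hu, hmin⟩ := (isCompact_sphere (0 : V) 1).exists_isMinOn
    (NormedSpace.sphere_nonempty.2 zero_le_one)
    (by fun_prop : Continuous fun v : V => b v v).continuousOn
  have hu0 : (u : E) ≠ 0 := fun h => by simp [Submodule.coe_eq_zero.1 h] at hu
  refine ⟨b u u, hb _ hu0, fun v hv => ?_⟩
  rcases eq_or_ne v 0 with rfl | hv0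
  · simp
  have hnv : 0 < ‖v‖ := norm_pos_iff.2 hv0
  set w : V := ‖v‖⁻¹ • ⟨v, hv⟩
  have hw : w ∈ Metric.sphere (0 : V) 1 := by
    simp [w, norm_smul, hnv.ne']
  have hvw : v = ‖v‖ • (w : E) := by simp [w, smul_smul, hnv.ne']
  calc b u u * ‖v‖ ^ 2 ≤ b w w * ‖v‖ ^ 2 := by gcongr; exact hmin hw
    _ = b v v := by
      conv_rhs => rw [hvw]
      simp only [map_smul, smul_apply, smul_eq_mul]; ring

/-- `rayleighSet` and `minmaxValues` are the two sets in the definition of `minmaxEigenvalue`,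
which is thus definitionally `sInf (minmaxValues b₀ B k W)`. -/
def rayleighSet (b₀ B : E →L[ℝ] E →L[ℝ] ℝ) (V : Submodule ℝ E) : Set ℝ :=
  { r : ℝ | ∃ u : E, u ∈ V ∧ b₀ u u = 1 ∧ r = B u u }

def minmaxValues (b₀ B : E →L[ℝ] E →L[ℝ] ℝ) (k : ℕ) (W : Submodule ℝ E) : Set ℝ :=
  { S : ℝ | ∃ V : Submodule ℝ E, V ≤ W ∧ Module.finrank ℝ V = k ∧ S = sSup (rayleighSet b₀ B V) }

section Rayleigh

variable {b₀ B : E →L[ℝ] E →L[ℝ] ℝ} {V : Submodule ℝ E}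

theorem div_mem_rayleighSet {v : E} (hv : v ∈ V) (hpos : 0 < b₀ v v) :
    B v v / b₀ v v ∈ rayleighSet b₀ B V := by
  have hsq : (√(b₀ v v))⁻¹ ^ 2 = (b₀ v v)⁻¹ := by rw [inv_pow, Real.sq_sqrt hpos.le]
  refine ⟨(√(b₀ v v))⁻¹ • v, V.smul_mem _ hv, ?_, ?_⟩ <;>
    simp only [map_smul, smul_apply, smul_eq_mul, ← mul_assoc, ← sq, hsq]
  · exact inv_mul_cancel₀ hpos.ne'
  · exact div_eq_inv_mul _ _

theorem rayleighSet_nonempty (hb₀ : ∀ u : E, u ≠ 0 → 0 < b₀ u u) (hV : V ≠ ⊥) :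
    (rayleighSet b₀ B V).Nonempty :=
  let ⟨v, hv, hv0⟩ := V.exists_mem_ne_zero_of_ne_bot hV
  ⟨_, div_mem_rayleighSet hv (hb₀ v hv0)⟩

theorem bddAbove_rayleighSet (hb₀ : ∀ u : E, u ≠ 0 → 0 < b₀ u u) [FiniteDimensional ℝ V] :
    BddAbove (rayleighSet b₀ B V) := by
  obtain ⟨m, hm, hcoer⟩ := V.exists_pos_mul_norm_sq_le b₀ hb₀
  refine ⟨‖B‖ / m, ?_⟩
  rintro _ ⟨u, hu, hu1, rfl⟩
  have hnorm : m * ‖u‖ ^ 2 ≤ 1 := hu1 ▸ hcoer u hu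
  rw [le_div_iff₀ hm]
  nlinarith [(le_abs_self _).trans (B.le_opNorm₂ u u), norm_nonneg B]

theorem apply_self_le_sSup_rayleighSet_mul (hb₀ : ∀ u : E, u ≠ 0 → 0 < b₀ u u)
    [FiniteDimensional ℝ V] {v : E} (hv : v ∈ V) :
    B v v ≤ sSup (rayleighSet b₀ B V) * b₀ v v := by
  rcases eq_or_ne v 0 with rfl | hv0
  · simp
  rw [← div_le_iff₀ (hb₀ v hv0)]
  exact le_csSup (bddAbove_rayleighSet hb₀) (div_mem_rayleighSet hv (hb₀ v hv0))

end Rayleigh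

section MinMax

variable {b₀ B : E →L[ℝ] E →L[ℝ] ℝ} {k : ℕ} {W : Submodule ℝ E}

theorem bddBelow_minmaxValues (hb₀ : ∀ u : E, u ≠ 0 → 0 < b₀ u u) {γ : ℝ}
    (hγ : ∀ u : E, γ * b₀ u u ≤ B u u) (hk : 1 ≤ k) (W : Submodule ℝ E) :
    BddBelow (minmaxValues b₀ B k W) := by
  refine ⟨γ, ?_⟩
  rintro _ ⟨V, -, hVk, rfl⟩
  have : FiniteDimensional ℝ V := Module.finite_of_finrank_pos (by omega)
  obtain ⟨v, hv, hv0⟩ := V.exists_mem_ne_zero_of_ne_bot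
    (Submodule.one_le_finrank_iff.1 (hVk ▸ hk))
  have hpos := hb₀ v hv0
  calc γ ≤ B v v / b₀ v v := (le_div_iff₀ hpos).2 (hγ v)
    _ ≤ _ := le_csSup (bddAbove_rayleighSet hb₀) (div_mem_rayleighSet hv hpos)

theorem minmaxEigenvalue_le_sSup_rayleighSet (hbdd : BddBelow (minmaxValues b₀ B k W))
    {V : Submodule ℝ E} (hVW : V ≤ W) (hVk : Module.finrank ℝ V = k) :
    minmaxEigenvalue b₀ B k W ≤ sSup (rayleighSet b₀ B V) :=
  csInf_le hbdd ⟨V, hVW, hVk, rfl⟩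

theorem exists_sSup_rayleighSet_lt_minmaxEigenvalue_add
    (hbdd : BddBelow (minmaxValues b₀ B k W))
    (hW : ∃ V : Submodule ℝ E, V ≤ W ∧ Module.finrank ℝ V = k) {ε : ℝ} (hε : 0 < ε) :
    ∃ V : Submodule ℝ E, V ≤ W ∧ Module.finrank ℝ V = k ∧
      sSup (rayleighSet b₀ B V) < minmaxEigenvalue b₀ B k W + ε := by
  obtain ⟨V, hVW, hVk⟩ := hW
  obtain ⟨_, ⟨V, hVW, hVk, rfl⟩, hlt⟩ :=
    (csInf_lt_iff hbdd ⟨_, V, hVW, hVk, rfl⟩).1 (lt_add_of_pos_right (minmaxEigenvalue b₀ B k W) hε)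
  exact ⟨V, hVW, hVk, hlt⟩

end MinMax

theorem apply_self_le_mul_of_norm_sub_le {b₀ B : E →L[ℝ] E →L[ℝ] ℝ} {c ε m η : ℝ} (hε : 0 ≤ ε)
    (hη : η ≤ 1) (hb₀η : 6 * η * ‖b₀‖ ≤ m) (hQη : 6 * η * ‖B - c • b₀‖ ≤ ε * m) {x v : E}
    (hcoer : m * ‖v‖ ^ 2 ≤ b₀ v v) (hc : B v v ≤ c * b₀ v v) (hxv : ‖x - v‖ ≤ η * ‖v‖) :
    B x x ≤ (c + ε) * b₀ x x := by
  -- `B - c • b₀` is `≤ 0` at `v` and moves little; `b₀` stays coercive at `x`.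
  have hQ := (B - c • b₀).apply_self_le_of_norm_sub_le hη hxv
  have hb := (-b₀).apply_self_le_of_norm_sub_le hη hxv
  rw [ContinuousLinearMap.opNorm_neg] at hb
  simp only [sub_apply, smul_apply, neg_apply, smul_eq_mul] at hQ hb
  have hv2 := sq_nonneg ‖v‖
  have hb₀x : m / 2 * ‖v‖ ^ 2 ≤ b₀ x x := by nlinarith [mul_le_mul_of_nonneg_right hb₀η hv2]
  nlinarith [mul_le_mul_of_nonneg_right hQη hv2, mul_le_mul_of_nonneg_left hb₀x hε]

section Perturbation

variable (V : Submodule ℝ E)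

theorem Submodule.eventually_injective_near_subtypeL :
    ∀ᶠ T : V →L[ℝ] E in 𝓝 V.subtypeL, Function.Injective T := by
  filter_upwards [(tendsto_norm_sub_self (V.subtypeL : V →L[ℝ] E)).eventually_lt_const one_pos]
    with T hT
  refine (injective_iff_map_eq_zero T).2 fun v hv => norm_le_zero_iff.1 ?_
  have : ‖v‖ ≤ ‖T - V.subtypeL‖ * ‖v‖ := by
    simpa [hv] using (T - V.subtypeL).le_opNorm v
  nlinarith [norm_nonneg v]

theorem Submodule.eventually_apply_self_le_near_subtypeL {b₀ B : E →L[ℝ] E →L[ℝ] ℝ}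
    (hb₀ : ∀ u : E, u ≠ 0 → 0 < b₀ u u) [FiniteDimensional ℝ V] {c ε : ℝ} (hε : 0 < ε)
    (hc : ∀ v ∈ V, B v v ≤ c * b₀ v v) :
    ∀ᶠ T : V →L[ℝ] E in 𝓝 V.subtypeL, ∀ v : V, B (T v) (T v) ≤ (c + ε) * b₀ (T v) (T v) := by
  obtain ⟨m, hm, hcoer⟩ := V.exists_pos_mul_norm_sq_le b₀ hb₀
  have hlim := tendsto_norm_sub_self (V.subtypeL : V →L[ℝ] E)
  filter_upwards [hlim.eventually_le_const one_pos,
    (hlim.const_mul (6 * ‖b₀‖)).eventually_le_const (by simpa using hm),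
    (hlim.const_mul (6 * ‖B - c • b₀‖)).eventually_le_const (by simpa using mul_pos hε hm)]
    with T h1 hb₀T hQT v
  refine apply_self_le_mul_of_norm_sub_le hε.le h1 (by linarith) (by linarith)
    (hcoer v v.2) (hc v v.2) ?_
  simpa using (T - V.subtypeL).le_opNorm v

end Perturbation

theorem Submodule.subtypeL_mem_closure_of_subset_closure_iUnion {ι : Type*} [Nonempty ι]
    {H : ι → Submodule ℝ E} (hH : Directed (· ≤ ·) H) (V : Submodule ℝ E)
    [FiniteDimensional ℝ V] (hV : (V : Set E) ⊆ closure (⋃ i, (H i : Set E))) :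
    V.subtypeL ∈ closure {T : V →L[ℝ] E | ∃ i, ∀ v, T v ∈ H i} := by
  let b := Module.finBasis ℝ V
  let Φ : (Fin (Module.finrank ℝ V) → E) →L[ℝ] V →L[ℝ] E :=
    ∑ j, (ContinuousLinearMap.smulRightL ℝ V E
      (LinearMap.toContinuousLinearMap (b.coord j))).comp (ContinuousLinearMap.proj j)
  have hΦ : ∀ f v, Φ f v = ∑ j, b.repr v j • f j := by intro f v; simp [Φ]
  have hΦb : Φ (fun j => b j) = V.subtypeL := by
    ext v
    rw [hΦ]
    have := congrArg Subtype.val (b.sum_repr v)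
    push_cast at this
    exact this
  have hb : (fun j => (b j : E)) ∈ closure (Set.univ.pi fun _ => ⋃ i, (H i : Set E)) := by
    rw [closure_pi_set]
    exact fun j _ => hV (b j).2
  rw [← hΦb]
  refine map_mem_closure Φ.continuous hb fun f hf => ?_
  choose g hg using fun j => Set.mem_iUnion.1 (hf j (Set.mem_univ j))
  obtain ⟨i, hi⟩ := hH.finite_le g
  exact ⟨i, fun v => (hΦ f v) ▸ Submodule.sum_mem _ fun j _ => Submodule.smul_mem _ _ (hi j (hg j))⟩

theorem sSup_rayleighSet_range_le {b₀ B : E →L[ℝ] E →L[ℝ] ℝ} {V : Submodule ℝ E}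
    (T : V →L[ℝ] E) {c : ℝ} (hc : ∀ v : V, B (T v) (T v) ≤ c * b₀ (T v) (T v))
    (hne : (rayleighSet b₀ B (LinearMap.range (T : V →ₗ[ℝ] E))).Nonempty) :
    sSup (rayleighSet b₀ B (LinearMap.range (T : V →ₗ[ℝ] E))) ≤ c := by
  refine csSup_le hne ?_
  rintro _ ⟨_, ⟨v, rfl⟩, hv1, rfl⟩
  simp only [ContinuousLinearMap.coe_coe] at hv1 ⊢
  simpa [hv1] using hc v

end

theorem minmaxEigenvalue_left_continuous_general {E : Type*} [NormedAddCommGroup E] [NormedSpace ℝ E]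
    (b₀ B : E →L[ℝ] E →L[ℝ] ℝ)
    (hb₀pos : ∀ u : E, u ≠ 0 → 0 < b₀ u u)
    (γ : ℝ) (hγ : ∀ u : E, γ * b₀ u u ≤ B u u)
    (k : ℕ) (hk : 1 ≤ k)
    (t : ℝ) (H : ℝ → Submodule ℝ E) (hmono : Monotone H)
    (hdense : (H t : Set E) ⊆ closure (⋃ s ∈ Set.Iio t, (H s : Set E)))
    (hrank : ∃ V : Submodule ℝ E, V ≤ H t ∧ Module.finrank ℝ V = k) :
    ∀ ε > (0:ℝ), ∃ s < t,
      minmaxEigenvalue b₀ B k (H s) < minmaxEigenvalue b₀ B k (H t) + ε := by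
  intro ε hε
  have hbdd := bddBelow_minmaxValues hb₀pos hγ hk
  obtain ⟨V, hVt, hVk, hVlt⟩ :=
    exists_sSup_rayleighSet_lt_minmaxEigenvalue_add (hbdd (H t)) hrank (half_pos hε)
  have : FiniteDimensional ℝ V := Module.finite_of_finrank_pos (by omega)
  have : Nonempty (Set.Iio t) := Set.nonempty_Iio.to_subtype
  have hVcl : (V : Set E) ⊆ closure (⋃ s : Set.Iio t, (H s : Set E)) := by
    rw [Set.iUnion_coe_set]
    exact (SetLike.coe_subset_coe.2 hVt).trans hdense
  have happrox := V.subtypeL_mem_closure_of_subset_closure_iUnion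
    (hmono.comp (Subtype.mono_coe _)).directed_le hVcl
  have hnear := V.eventually_injective_near_subtypeL.and
    (V.eventually_apply_self_le_near_subtypeL (B := B) hb₀pos (half_pos hε)
      fun v hv => apply_self_le_sSup_rayleighSet_mul hb₀pos hv)
  obtain ⟨T, ⟨⟨s, hs⟩, hTs⟩, hTinj, hTle⟩ :=
    ((mem_closure_iff_frequently.1 happrox).and_eventually hnear).exists
  have hTk : Module.finrank ℝ (LinearMap.range (T : V →ₗ[ℝ] E)) = k :=
    (LinearMap.finrank_range_of_inj hTinj).trans hVk
  refine ⟨s, hs, ?_⟩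
  calc minmaxEigenvalue b₀ B k (H s)
      ≤ sSup (rayleighSet b₀ B (LinearMap.range (T : V →ₗ[ℝ] E))) :=
        minmaxEigenvalue_le_sSup_rayleighSet (hbdd _) (by rintro _ ⟨v, rfl⟩; exact hTs v) hTk
    _ ≤ sSup (rayleighSet b₀ B V) + ε / 2 :=
        sSup_rayleighSet_range_le T hTle
          (rayleighSet_nonempty hb₀pos (Submodule.one_le_finrank_iff.1 (hTk ▸ hk)))
    _ < minmaxEigenvalue b₀ B k (H t) + ε := by linarith

/-- Core of Theorem 4.1 (left-continuity of eigenvalues): if `(H_s)` is a monotone family of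
subspaces with `H_t` contained in the closure of `⋃_{s<t} H_s`, then for every `ε > 0` there
is `s < t` with `λ_k(H_s) < λ_k(H_t) + ε`. -/
theorem minmaxEigenvalue_left_continuous {E : Type*} [NormedAddCommGroup E] [NormedSpace ℝ E]
    (b₀ B : E →L[ℝ] E →L[ℝ] ℝ)
    (hb₀sym : ∀ u v, b₀ u v = b₀ v u) (hBsym : ∀ u v, B u v = B v u)
    (hb₀pos : ∀ u : E, u ≠ 0 → 0 < b₀ u u)
    (γ : ℝ) (hγ : ∀ u : E, γ * b₀ u u ≤ B u u)
    (k : ℕ) (hk : 1 ≤ k)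
    (t : ℝ) (H : ℝ → Submodule ℝ E) (hmono : Monotone H)
    (hdense : (H t : Set E) ⊆ closure (⋃ s ∈ Set.Iio t, (H s : Set E)))
    (hrank : ∃ V : Submodule ℝ E, V ≤ H t ∧ Module.finrank ℝ V = k) :
    ∀ ε > (0:ℝ), ∃ s < t,
      minmaxEigenvalue b₀ B k (H s) < minmaxEigenvalue b₀ B k (H t) + ε :=
  minmaxEigenvalue_left_continuous_general b₀ B hb₀pos γ hγ k hk t H hmono hdense hrank
end

section
/- (Corollary 3.1, Euclidean formulation: no step functions in W^{1,2}.) Let Ω ⊆ ℝⁿ be a nonempty connected open set, let D ⊆ Ω be a measurable set with both D and Ω \ D of positive Lebesgue measure, and let a ≠ b be real numbers. Define g : ℝⁿ → ℝ by g(p) = a if p ∈ D and g(p) = b otherwise. Then there is no sequence (f_k) of functions ℝⁿ → ℝ, each continuously differentiable on Ω, such that ∫_Ω (f_k − g)² → 0 as k → ∞ and the gradients are Cauchy in L²(Ω), i.e. for every ε > 0 there is N such that for all k, j ≥ N, ∫_Ω ‖∇f_k − ∇f_j‖² < ε. -/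
open MeasureTheory Set Filter Topology
open scoped Classical

/-!
If `f_k → g` in `L²(Ω)` and the gradients `∇f_k` are Cauchy in `L²(Ω)`, integrating `∇f_k` along
segments gives `‖g (· + h) - g‖_{L²(B)} ≤ C ‖h‖` on every ball `B` well inside `Ω`. For the step
function the square of the left side is `(a - b)² |B ∩ (D ∆ (D - h))|`, so this symmetric difference
has measure `O(‖h‖²)`. Chaining `m` translations by `h / m` improves the bound to `O(‖h‖² / m)`, so
it is null; by Fubini `D` is then locally null or locally conull, and since `Ω` is connected one of
the two alternatives holds on all of `Ω`.
-/

open scoped ENNReal symmDiff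
open Metric

theorem sq_eLpNorm_two {α ε : Type*} [MeasurableSpace α] [ENorm ε] (μ : Measure α) (f : α → ε) :
    eLpNorm f 2 μ ^ 2 = ∫⁻ x, ‖f x‖ₑ ^ 2 ∂μ := by
  simpa using eLpNorm_nnreal_pow_eq_lintegral (μ := μ) (f := f) (p := 2) two_ne_zero

theorem lintegral_ofReal_norm_sq {α F : Type*} [MeasurableSpace α] [NormedAddCommGroup F]
    (μ : Measure α) (f : α → F) :
    ∫⁻ x, ENNReal.ofReal (‖f x‖ ^ 2) ∂μ = eLpNorm f 2 μ ^ 2 := by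
  simp_rw [sq_eLpNorm_two, ← ofReal_norm, ENNReal.ofReal_pow (norm_nonneg _)]

theorem tendsto_nhds_zero_of_tendsto_sq {ι : Type*} {l : Filter ι} {u : ι → ℝ≥0∞}
    (hu : Tendsto (fun i ↦ u i ^ 2) l (𝓝 0)) : Tendsto u l (𝓝 0) := by
  rw [ENNReal.tendsto_nhds_zero] at hu ⊢
  intro ε hε
  filter_upwards [hu (ε ^ 2) (by positivity)] with i hi
  exact (ENNReal.pow_le_pow_left_iff two_ne_zero).1 hi

theorem sq_lintegral_le_lintegral_sq {α : Type*} [MeasurableSpace α] (ν : Measure α)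
    [IsProbabilityMeasure ν] {φ : α → ℝ≥0∞} (hφ : AEMeasurable φ ν) :
    (∫⁻ a, φ a ∂ν) ^ 2 ≤ ∫⁻ a, φ a ^ 2 ∂ν := by
  have h12 := eLpNorm_le_eLpNorm_of_exponent_le (μ := ν) (p := 1) (q := 2) one_le_two
    hφ.aestronglyMeasurable
  rw [eLpNorm_one_eq_lintegral_enorm] at h12
  simpa [sq_eLpNorm_two] using pow_le_pow_left' h12 2

theorem IsPreconnected.measure_inter_eq_zero_or_measure_diff_eq_zero {X : Type*}
    [TopologicalSpace X] [SecondCountableTopology X] [MeasurableSpace X] {μ : Measure X}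
    [μ.IsOpenPosMeasure] {Ω D : Set X} (hΩ : IsPreconnected Ω)
    (hloc : ∀ x ∈ Ω, x ∉ (μ.restrict D).support ∨ x ∉ (μ.restrict Dᶜ).support) :
    μ (Ω ∩ D) = 0 ∨ μ (Ω \ D) = 0 := by
  have hle : μ ≤ μ.restrict D + μ.restrict Dᶜ := Measure.le_iff'.2 fun s ↦
    (measure_le_inter_add_sdiff μ s D).trans
      (add_le_add (Measure.le_restrict_apply _ _) (Measure.le_restrict_apply _ _))
  have hsupp : Ω ∩ ((μ.restrict D).supportᶜ ∩ (μ.restrict Dᶜ).supportᶜ) = ∅ := by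
    refine eq_empty_of_forall_notMem fun x ⟨_, h₁, h₂⟩ ↦ ?_
    have hx : x ∈ (μ.restrict D + μ.restrict Dᶜ).support :=
      Measure.support_mono hle (μ.support_eq_univ ▸ mem_univ x)
    rw [Measure.support_add] at hx
    exact hx.elim h₁ h₂
  rcases isPreconnected_iff_subset_of_disjoint.1 hΩ _ _ Measure.isOpen_compl_support
    Measure.isOpen_compl_support hloc hsupp with h | h
  · exact .inl <| le_antisymm ((Measure.le_restrict_apply _ _).trans <|
      (measure_mono h).trans (Measure.measure_compl_support).le) zero_le
  · exact .inr <| le_antisymm ((Measure.le_restrict_apply _ _).trans <|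
      (measure_mono h).trans (Measure.measure_compl_support).le) zero_le

theorem add_mem_ball_of_norm_le {G : Type*} [SeminormedAddCommGroup G] {x x₀ v : G}
    {ρ δ : ℝ} (hx : x ∈ ball x₀ ρ) (hv : ‖v‖ ≤ δ) : x + v ∈ ball x₀ (ρ + δ) :=
  mem_ball.2 <| calc dist (x + v) x₀ ≤ dist (x + v) x + dist x x₀ := dist_triangle _ _ _
    _ < δ + ρ := by rw [dist_self_add_left]; exact add_lt_add_of_le_of_lt hv hx
    _ = ρ + δ := add_comm _ _

section Translation

variable {G : Type*}

theorem symmDiff_preimage_add_nsmul_subset [AddMonoid G] (D : Set G) (h : G) (m : ℕ) :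
    D ∆ ((· + m • h) ⁻¹' D) ⊆ ⋃ i ∈ Finset.range m, (· + i • h) ⁻¹' (D ∆ ((· + h) ⁻¹' D)) := by
  induction m with
  | zero => simp
  | succ m ih =>
    have hstep : (· + (m + 1) • h) ⁻¹' D = (· + m • h) ⁻¹' ((· + h) ⁻¹' D) := by
      ext x; simp [succ_nsmul, add_assoc]
    rw [hstep, Finset.range_add_one, Finset.set_biUnion_insert, union_comm]
    refine (symmDiff_triangle D ((· + m • h) ⁻¹' D) _).trans (union_subset_union ih ?_)
    rw [← preimage_symmDiff]

theorem measure_symmDiff_preimage_add_nsmul_inter_ball_le [SeminormedAddCommGroup G]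
    [MeasurableSpace G] [MeasurableAdd G] (μ : Measure G) [μ.IsAddRightInvariant] (D : Set G)
    (h x₀ : G) (ρ : ℝ) (m : ℕ) :
    μ (D ∆ ((· + m • h) ⁻¹' D) ∩ ball x₀ ρ)
      ≤ m * μ (D ∆ ((· + h) ⁻¹' D) ∩ ball x₀ (ρ + m * ‖h‖)) := by
  set T := D ∆ ((· + h) ⁻¹' D) ∩ ball x₀ (ρ + m * ‖h‖)
  have hcover :
      D ∆ ((· + m • h) ⁻¹' D) ∩ ball x₀ ρ ⊆ ⋃ i ∈ Finset.range m, (· + i • h) ⁻¹' T := by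
    rintro x ⟨hxD, hxB⟩
    obtain ⟨i, hi, hxi⟩ := mem_iUnion₂.1 (symmDiff_preimage_add_nsmul_subset D h m hxD)
    refine mem_iUnion₂.2 ⟨i, hi, hxi, ?_⟩
    have hi' : (i : ℝ) ≤ m := by exact_mod_cast (Finset.mem_range.1 hi).le
    exact add_mem_ball_of_norm_le hxB ((norm_nsmul_le ..).trans (by gcongr))
  calc μ (D ∆ ((· + m • h) ⁻¹' D) ∩ ball x₀ ρ)
      ≤ ∑ i ∈ Finset.range m, μ ((· + i • h) ⁻¹' T) :=
        (measure_mono hcover).trans (measure_biUnion_finset_le _ _)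
    _ = m * μ T := by simp [measure_preimage_add_right]

theorem setLIntegral_comp_add_right_le [AddGroup G] [MeasurableSpace G]
    [MeasurableAdd G] (μ : Measure G) [μ.IsAddRightInvariant] (f : G → ℝ≥0∞) {s t : Set G}
    {h : G} (hst : ∀ x ∈ s, x + h ∈ t) :
    ∫⁻ x in s, f (x + h) ∂μ ≤ ∫⁻ y in t, f y ∂μ :=
  calc ∫⁻ x in s, f (x + h) ∂μ ≤ ∫⁻ x in (· + h) ⁻¹' t, f (x + h) ∂μ := lintegral_mono_set hst
    _ = ∫⁻ y in t, f y ∂μ := (measurePreserving_add_right μ h).setLIntegral_comp_preimage_emb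
        (MeasurableEquiv.addRight h).measurableEmbedding f t

theorem eLpNorm_comp_add_right_le {ε : Type*} [AddGroup G] [MeasurableSpace G]
    [MeasurableAdd G] [TopologicalSpace ε] [ContinuousENorm ε] (μ : Measure G)
    [μ.IsAddRightInvariant] (f : G → ε) (p : ℝ≥0∞) {s t : Set G} {h : G}
    (hst : ∀ x ∈ s, x + h ∈ t) :
    eLpNorm (fun x ↦ f (x + h)) p (μ.restrict s) ≤ eLpNorm f p (μ.restrict t) := by
  have he : MeasurableEmbedding (· + h) := (MeasurableEquiv.addRight h).measurableEmbedding
  have hmp := (measurePreserving_add_right μ h).restrict_preimage_emb he t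
  have hsub : s ⊆ (· + h) ⁻¹' t := hst
  calc eLpNorm (fun x ↦ f (x + h)) p (μ.restrict s)
      ≤ eLpNorm (fun x ↦ f (x + h)) p (μ.restrict ((· + h) ⁻¹' t)) :=
        eLpNorm_mono_measure (fun x ↦ f (x + h)) (Measure.restrict_mono hsub le_rfl)
    _ = eLpNorm f p (μ.restrict t) := by
        rw [← hmp.map_eq, he.eLpNorm_map_measure]
        rfl

theorem measure_mul_measure_eq_zero_of_forall_measure_inter_preimage_add_eq_zero
    [AddCommGroup G] [MeasurableSpace G] [MeasurableAdd₂ G] (μ : Measure G) [SFinite μ]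
    [μ.IsAddRightInvariant] {A B : Set G} (hA : MeasurableSet A) (hB : MeasurableSet B)
    (hnull : ∀ h, μ (A ∩ (· + h) ⁻¹' B) = 0) :
    μ A * μ B = 0 := by
  set S := {p : G × G | p.1 ∈ A ∧ p.1 + p.2 ∈ B}
  have hS : MeasurableSet S := (measurable_fst hA).inter (measurable_add hB)
  calc μ A * μ B = ∫⁻ x, A.indicator (fun _ ↦ μ B) x ∂μ := by
        rw [lintegral_indicator_const hA, mul_comm]
    _ = (μ.prod μ) S := by
        rw [Measure.prod_apply hS]
        refine lintegral_congr fun x ↦ ?_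
        by_cases hx : x ∈ A
        · rw [indicator_of_mem hx, ← measure_preimage_add_right μ x B]
          congr 1
          ext y
          simp [S, hx, add_comm x]
        · simp [S, hx]
    _ = ∫⁻ h, μ (A ∩ (· + h) ⁻¹' B) ∂μ := by
        rw [Measure.prod_apply_symm hS]
        rfl
    _ = 0 := by simp [hnull]

theorem sq_eLpNorm_ite_comp_add_sub {F : Type*} [Add G] [MeasurableSpace G] [MeasurableAdd G]
    [NormedAddCommGroup F] {D : Set G} (hD : MeasurableSet D) (a b : F) (h : G)
    (ν : Measure G) :
    eLpNorm (fun x ↦ (if x + h ∈ D then a else b) - if x ∈ D then a else b) 2 ν ^ 2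
      = ‖a - b‖ₑ ^ 2 * ν (D ∆ ((· + h) ⁻¹' D)) := by
  rw [sq_eLpNorm_two, ← lintegral_indicator_const (hD.symmDiff (measurable_add_const h hD))]
  refine lintegral_congr fun x ↦ ?_
  by_cases hx : x ∈ D <;> by_cases hxh : x + h ∈ D <;>
    simp [hx, hxh, mem_symmDiff, enorm_sub_rev a b]

theorem measure_symmDiff_preimage_add_inter_le {F : Type*} [Add G] [MeasurableSpace G]
    [MeasurableAdd G] [NormedAddCommGroup F] (μ : Measure G) {D s : Set G} (hD : MeasurableSet D)
    {a b : F} (hab : a ≠ b) {h : G} {c : ℝ≥0∞}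
    (hc : eLpNorm (fun x ↦ (if x + h ∈ D then a else b) - if x ∈ D then a else b) 2
      (μ.restrict s) ≤ c) :
    μ (D ∆ ((· + h) ⁻¹' D) ∩ s) ≤ c ^ 2 / ‖a - b‖ₑ ^ 2 := by
  have hsq := pow_le_pow_left' hc 2
  rw [sq_eLpNorm_ite_comp_add_sub hD,
    Measure.restrict_apply (hD.symmDiff (measurable_add_const h hD))] at hsq
  rw [ENNReal.le_div_iff_mul_le (.inl (pow_ne_zero 2 (enorm_ne_zero.2 (sub_ne_zero.2 hab))))
    (.inl (by simp)), mul_comm]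
  exact hsq

end Translation

theorem measure_symmDiff_preimage_add_inter_ball_eq_zero_of_le_mul_sq {E : Type*}
    [NormedAddCommGroup E] [NormedSpace ℝ E] [MeasurableSpace E] [MeasurableAdd E] (μ : Measure E)
    [μ.IsAddRightInvariant] {D : Set E} {x₀ : E} {ρ : ℝ} {K : ℝ≥0∞} (hK : K ≠ ∞)
    (hbound : ∀ h : E, ‖h‖ ≤ ρ → μ (D ∆ ((· + h) ⁻¹' D) ∩ ball x₀ (2 * ρ)) ≤ K * ‖h‖ₑ ^ 2)
    {h : E} (hh : ‖h‖ ≤ ρ) :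
    μ (D ∆ ((· + h) ⁻¹' D) ∩ ball x₀ ρ) = 0 := by
  have hm : ∀ m : ℕ, 0 < m →
      μ (D ∆ ((· + h) ⁻¹' D) ∩ ball x₀ ρ) ≤ K * ‖h‖ₑ ^ 2 * (m : ℝ≥0∞)⁻¹ := by
    intro m hm
    set h' := (m : ℝ)⁻¹ • h
    have hm' : (m : ℝ) ≠ 0 := by positivity
    have hmh' : m • h' = h := by
      rw [← Nat.cast_smul_eq_nsmul ℝ, smul_smul, mul_inv_cancel₀ hm', one_smul]
    have hnorm : (m : ℝ) * ‖h'‖ = ‖h‖ := by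
      simp only [h', norm_smul, norm_inv, Real.norm_natCast]
      field_simp
    have henorm : ‖h'‖ₑ = (m : ℝ≥0∞)⁻¹ * ‖h‖ₑ := by
      rw [enorm_smul, enorm_inv hm', Real.enorm_natCast]
    calc μ (D ∆ ((· + h) ⁻¹' D) ∩ ball x₀ ρ)
        ≤ m * μ (D ∆ ((· + h') ⁻¹' D) ∩ ball x₀ (ρ + m * ‖h'‖)) := by
          simpa [hmh'] using measure_symmDiff_preimage_add_nsmul_inter_ball_le μ D h' x₀ ρ m
      _ ≤ m * (K * ‖h'‖ₑ ^ 2) := by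
          gcongr
          refine (measure_mono (inter_subset_inter_right _ (ball_subset_ball ?_))).trans
            (hbound h' ?_)
          · linarith
          · refine le_trans ?_ hh
            rw [← hnorm]
            exact le_mul_of_one_le_left (norm_nonneg _) (by exact_mod_cast hm)
      _ = K * ‖h‖ₑ ^ 2 * (m : ℝ≥0∞)⁻¹ := by
          have hinv : (m : ℝ≥0∞) * (m : ℝ≥0∞)⁻¹ ^ 2 = (m : ℝ≥0∞)⁻¹ := by
            rw [sq, ← mul_assoc, ENNReal.mul_inv_cancel (by exact_mod_cast hm.ne')
              (ENNReal.natCast_ne_top m), one_mul]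
          rw [henorm, mul_pow, show (m : ℝ≥0∞) * (K * ((m : ℝ≥0∞)⁻¹ ^ 2 * ‖h‖ₑ ^ 2))
            = K * ‖h‖ₑ ^ 2 * ((m : ℝ≥0∞) * (m : ℝ≥0∞)⁻¹ ^ 2) by ring, hinv]
  have hlim : Tendsto (fun m : ℕ ↦ K * ‖h‖ₑ ^ 2 * (m : ℝ≥0∞)⁻¹) atTop (𝓝 0) := by
    simpa using ENNReal.Tendsto.const_mul ENNReal.tendsto_inv_nat_nhds_zero
      (.inr (ENNReal.mul_ne_top hK (by simp)))
  exact le_antisymm (ge_of_tendsto hlim ((eventually_gt_atTop 0).mono hm)) zero_le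

theorem notMem_support_restrict_or_notMem_support_restrict_compl_of_measure_symmDiff {E : Type*}
    [NormedAddCommGroup E] [MeasurableSpace E] [BorelSpace E] [MeasurableAdd₂ E]
    (μ : Measure E) [SFinite μ] [μ.IsAddRightInvariant] {D : Set E} (hD : MeasurableSet D)
    {x₀ : E} {ρ : ℝ} (hρ : 0 < ρ)
    (hnull : ∀ h : E, ‖h‖ < 2 * ρ → μ (D ∆ ((· + h) ⁻¹' D) ∩ ball x₀ ρ) = 0) :
    x₀ ∉ (μ.restrict D).support ∨ x₀ ∉ (μ.restrict Dᶜ).support := by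
  have hprod : μ (ball x₀ ρ ∩ D) * μ (ball x₀ ρ \ D) = 0 := by
    refine measure_mul_measure_eq_zero_of_forall_measure_inter_preimage_add_eq_zero μ
      (measurableSet_ball.inter hD) (measurableSet_ball.diff hD) fun h ↦ ?_
    by_cases hh : ‖h‖ < 2 * ρ
    · refine measure_mono_null ?_ (hnull h hh)
      rintro x ⟨⟨hxB, hxD⟩, -, hxhD⟩
      exact ⟨.inl ⟨hxD, hxhD⟩, hxB⟩
    · convert measure_empty (μ := μ)
      refine eq_empty_of_forall_notMem fun x ⟨⟨hxB, _⟩, hxhB, _⟩ ↦ hh ?_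
      calc ‖h‖ = dist (x + h) x := by simp
        _ ≤ dist (x + h) x₀ + dist x x₀ := dist_triangle_right _ _ _
        _ < ρ + ρ := add_lt_add (mem_ball.1 hxhB) (mem_ball.1 hxB)
        _ = 2 * ρ := by ring
  rw [Measure.notMem_support_iff_exists, Measure.notMem_support_iff_exists]
  refine (mul_eq_zero.1 hprod).imp (fun h ↦ ⟨_, ball_mem_nhds x₀ hρ, ?_⟩)
    (fun h ↦ ⟨_, ball_mem_nhds x₀ hρ, ?_⟩) <;>
  rwa [Measure.restrict_apply measurableSet_ball]

section Analysis

variable {E F : Type*} [NormedAddCommGroup E] [NormedSpace ℝ E] [NormedAddCommGroup F]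
  [NormedSpace ℝ F]

theorem enorm_sub_sq_le_mul_lintegral_enorm_fderiv_sq {t : Set E} (ht : IsOpen t) {u : E → F}
    (hu : ContDiffOn ℝ 1 u t) {x h : E} (hseg : ∀ τ ∈ Icc (0 : ℝ) 1, x + τ • h ∈ t) :
    ‖u (x + h) - u x‖ₑ ^ 2
      ≤ ‖h‖ₑ ^ 2 * ∫⁻ τ in Icc (0 : ℝ) 1, ‖fderiv ℝ u (x + τ • h)‖ₑ ^ 2 := by
  set γ : ℝ → E := fun τ ↦ x + τ • h
  have hγ (τ : ℝ) : HasDerivAt γ h τ := by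
    simpa [γ] using ((hasDerivAt_id τ).smul_const h).const_add x
  have huγ : ContDiffOn ℝ 1 (u ∘ γ) (Icc 0 1) :=
    hu.comp (contDiff_const.add (contDiff_id.smul contDiff_const)).contDiffOn hseg
  have hderiv : ∀ τ ∈ Icc (0 : ℝ) 1, deriv (u ∘ γ) τ = fderiv ℝ u (γ τ) h := fun τ hτ ↦
    (((hu.differentiableOn one_ne_zero).differentiableAt
      (ht.mem_nhds (hseg τ hτ))).hasFDerivAt.comp_hasDerivAt τ (hγ τ)).deriv
  have hcont : ContinuousOn (fun τ ↦ ‖fderiv ℝ u (γ τ)‖ₑ) (Icc 0 1) :=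
    continuous_enorm.comp_continuousOn <| (hu.continuousOn_fderiv_of_isOpen ht le_rfl).comp
      (by fun_prop) hseg
  have : IsProbabilityMeasure (volume.restrict (Icc (0 : ℝ) 1)) := ⟨by simp⟩
  calc ‖u (x + h) - u x‖ₑ ^ 2 = ‖(u ∘ γ) 1 - (u ∘ γ) 0‖ₑ ^ 2 := by simp [γ]
    _ ≤ (∫⁻ τ in Icc (0 : ℝ) 1, ‖deriv (u ∘ γ) τ‖ₑ) ^ 2 :=
        pow_le_pow_left' (enorm_sub_le_lintegral_deriv_of_contDiffOn_Icc huγ zero_le_one) 2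
    _ ≤ (∫⁻ τ in Icc (0 : ℝ) 1, ‖h‖ₑ * ‖fderiv ℝ u (γ τ)‖ₑ) ^ 2 := by
        gcongr ?_ ^ 2
        refine setLIntegral_mono' measurableSet_Icc fun τ hτ ↦ ?_
        rw [hderiv τ hτ, mul_comm]
        exact ContinuousLinearMap.le_opENorm _ _
    _ = ‖h‖ₑ ^ 2 * (∫⁻ τ in Icc (0 : ℝ) 1, ‖fderiv ℝ u (γ τ)‖ₑ) ^ 2 := by
        rw [lintegral_const_mul' _ _ enorm_ne_top, mul_pow]
    _ ≤ ‖h‖ₑ ^ 2 * ∫⁻ τ in Icc (0 : ℝ) 1, ‖fderiv ℝ u (γ τ)‖ₑ ^ 2 := by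
        gcongr
        exact sq_lintegral_le_lintegral_sq _ (hcont.aemeasurable measurableSet_Icc)

variable [MeasurableSpace E] [BorelSpace E] [FiniteDimensional ℝ E]

theorem eLpNorm_comp_add_sub_le [CompleteSpace F] (μ : Measure E) [μ.IsAddHaarMeasure]
    {s t : Set E} (hs : MeasurableSet s) (ht : IsOpen t) {u : E → F} (hu : ContDiffOn ℝ 1 u t)
    {h : E} (hst : ∀ x ∈ s, ∀ τ ∈ Icc (0 : ℝ) 1, x + τ • h ∈ t) :
    eLpNorm (fun x ↦ u (x + h) - u x) 2 (μ.restrict s)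
      ≤ ‖h‖ₑ * eLpNorm (fderiv ℝ u) 2 (μ.restrict t) := by
  rw [← ENNReal.pow_le_pow_left_iff two_ne_zero, mul_pow, sq_eLpNorm_two, sq_eLpNorm_two]
  set G : E → ℝ≥0∞ := fun y ↦ ‖fderiv ℝ u y‖ₑ ^ 2
  have hG : Measurable G := (measurable_fderiv ℝ u).enorm.pow_const 2
  calc ∫⁻ x in s, ‖u (x + h) - u x‖ₑ ^ 2 ∂μ
      ≤ ∫⁻ x in s, ‖h‖ₑ ^ 2 * (∫⁻ τ in Icc (0 : ℝ) 1, G (x + τ • h)) ∂μ :=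
        setLIntegral_mono' hs fun x hx ↦
          enorm_sub_sq_le_mul_lintegral_enorm_fderiv_sq ht hu (hst x hx)
    _ = ‖h‖ₑ ^ 2 * ∫⁻ τ in Icc (0 : ℝ) 1, ∫⁻ x in s, G (x + τ • h) ∂μ := by
        rw [lintegral_const_mul' _ _ (by simp),
          lintegral_lintegral_swap (f := fun x (τ : ℝ) ↦ G (x + τ • h))
            (hG.comp (measurable_fst.add (measurable_snd.smul_const h))).aemeasurable]
    _ ≤ ‖h‖ₑ ^ 2 * ∫⁻ τ in Icc (0 : ℝ) 1, ∫⁻ y in t, G y ∂μ := by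
        gcongr _ * ?_
        exact setLIntegral_mono' measurableSet_Icc fun τ hτ ↦
          setLIntegral_comp_add_right_le μ G fun x hx ↦ hst x hx τ hτ
    _ = ‖h‖ₑ ^ 2 * ∫⁻ y in t, G y ∂μ := by simp

theorem eLpNorm_comp_add_sub_le_of_tendsto [CompleteSpace F] (μ : Measure E)
    [μ.IsAddHaarMeasure] {s t : Set E} (hs : MeasurableSet s) (ht : IsOpen t)
    {f : ℕ → E → F} {g : E → F} (hf : ∀ k, ContDiffOn ℝ 1 (f k) t)
    (hg : AEStronglyMeasurable g μ)
    (hlim : Tendsto (fun k ↦ eLpNorm (f k - g) 2 (μ.restrict t)) atTop (𝓝 0)) {C : ℝ≥0∞}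
    (hC : ∀ᶠ k in atTop, eLpNorm (fderiv ℝ (f k)) 2 (μ.restrict t) ≤ C) {h : E}
    (hst : ∀ x ∈ s, ∀ τ ∈ Icc (0 : ℝ) 1, x + τ • h ∈ t) :
    eLpNorm (fun x ↦ g (x + h) - g x) 2 (μ.restrict s) ≤ C * ‖h‖ₑ := by
  have hst₀ : s ⊆ t := fun x hx ↦ by simpa using hst x hx 0 (by simp)
  have hst₁ : ∀ x ∈ s, x + h ∈ t := fun x hx ↦ by simpa using hst x hx 1 (by simp)
  have hgh : AEStronglyMeasurable (fun x ↦ g (x + h)) (μ.restrict s) :=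
    (hg.comp_measurePreserving (measurePreserving_add_right μ h)).restrict
  have hbound : ∀ k, eLpNorm (fderiv ℝ (f k)) 2 (μ.restrict t) ≤ C →
      eLpNorm (fun x ↦ g (x + h) - g x) 2 (μ.restrict s)
        ≤ eLpNorm (f k - g) 2 (μ.restrict t)
          + (C * ‖h‖ₑ + eLpNorm (f k - g) 2 (μ.restrict t)) := by
    intro k hk
    have hfk : AEStronglyMeasurable (f k) (μ.restrict s) :=
      ((hf k).continuousOn.mono hst₀).aestronglyMeasurable hs
    have hfkh : AEStronglyMeasurable (fun x ↦ f k (x + h)) (μ.restrict s) :=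
      ((hf k).continuousOn.comp (continuous_add_const h).continuousOn hst₁).aestronglyMeasurable
        hs
    have hsplit : (fun x ↦ g (x + h) - g x)
        = (fun x ↦ (g - f k) (x + h)) + ((fun x ↦ f k (x + h) - f k x) + (f k - g)) := by
      ext x; simp only [Pi.add_apply, Pi.sub_apply]; abel
    rw [hsplit]
    refine (eLpNorm_add_le (hgh.sub hfkh) ((hfkh.sub hfk).add (hfk.sub hg.restrict))
      one_le_two).trans (add_le_add ?_ ?_)
    · rw [eLpNorm_sub_comm (f k)]
      exact eLpNorm_comp_add_right_le μ (g - f k) 2 hst₁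
    refine (eLpNorm_add_le (hfkh.sub hfk) (hfk.sub hg.restrict) one_le_two).trans
      (add_le_add ?_ ?_)
    · calc eLpNorm (fun x ↦ f k (x + h) - f k x) 2 (μ.restrict s)
          ≤ ‖h‖ₑ * eLpNorm (fderiv ℝ (f k)) 2 (μ.restrict t) :=
            eLpNorm_comp_add_sub_le μ hs ht (hf k) hst
        _ ≤ C * ‖h‖ₑ := by rw [mul_comm]; gcongr
    · exact eLpNorm_mono_measure _ (Measure.restrict_mono hst₀ le_rfl)
  have hlim' : Tendsto (fun k ↦ eLpNorm (f k - g) 2 (μ.restrict t)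
      + (C * ‖h‖ₑ + eLpNorm (f k - g) 2 (μ.restrict t))) atTop (𝓝 (C * ‖h‖ₑ)) := by
    simpa using hlim.add (tendsto_const_nhds.add hlim)
  exact ge_of_tendsto hlim' (hC.mono hbound)

theorem exists_forall_ge_eLpNorm_fderiv_restrict_le (μ : Measure E)
    [IsFiniteMeasureOnCompacts μ] {Ω K : Set E} (hΩ : IsOpen Ω) (hK : IsCompact K)
    (hKΩ : K ⊆ Ω) {f : ℕ → E → F} (hf : ∀ k, ContDiffOn ℝ 1 (f k) Ω) {N : ℕ}
    (hN : ∀ k ≥ N, eLpNorm (fderiv ℝ (f k) - fderiv ℝ (f N)) 2 (μ.restrict Ω) ≤ 1) :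
    ∃ C ≠ ∞, ∀ k ≥ N, eLpNorm (fderiv ℝ (f k)) 2 (μ.restrict K) ≤ C := by
  have hDf (k : ℕ) : ContinuousOn (fderiv ℝ (f k)) K :=
    ((hf k).continuousOn_fderiv_of_isOpen hΩ le_rfl).mono hKΩ
  obtain ⟨M, hM⟩ := hK.exists_bound_of_continuousOn (hDf N)
  have hμK : μ.restrict K univ ^ (2 : ℝ≥0∞).toReal⁻¹ < ∞ := by
    simpa using ENNReal.rpow_lt_top_of_nonneg (by norm_num : (0 : ℝ) ≤ 2⁻¹) hK.measure_lt_top.ne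
  have hfin : eLpNorm (fderiv ℝ (f N)) 2 (μ.restrict K) ≠ ∞ :=
    ((eLpNorm_le_of_ae_bound (ae_restrict_of_forall_mem hK.measurableSet hM)).trans_lt
      (ENNReal.mul_lt_top hμK ENNReal.ofReal_lt_top)).ne
  refine ⟨1 + eLpNorm (fderiv ℝ (f N)) 2 (μ.restrict K), by simpa using hfin, fun k hk ↦ ?_⟩
  calc eLpNorm (fderiv ℝ (f k)) 2 (μ.restrict K)
      = eLpNorm ((fderiv ℝ (f k) - fderiv ℝ (f N)) + fderiv ℝ (f N)) 2 (μ.restrict K) := by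
        rw [sub_add_cancel]
    _ ≤ eLpNorm (fderiv ℝ (f k) - fderiv ℝ (f N)) 2 (μ.restrict K)
          + eLpNorm (fderiv ℝ (f N)) 2 (μ.restrict K) :=
        (eLpNorm_add_le (p := 2)
          (((hDf k).sub (hDf N)).aestronglyMeasurable (μ := μ) hK.measurableSet)
          ((hDf N).aestronglyMeasurable hK.measurableSet) one_le_two :)
    _ ≤ 1 + eLpNorm (fderiv ℝ (f N)) 2 (μ.restrict K) := by
        gcongr
        exact (eLpNorm_mono_measure _ (Measure.restrict_mono hKΩ le_rfl)).trans (hN k hk)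

theorem notMem_support_restrict_or_notMem_support_restrict_compl_of_tendsto [CompleteSpace F]
    (μ : Measure E) [μ.IsAddHaarMeasure] {Ω D : Set E} (hΩ : IsOpen Ω) (hD : MeasurableSet D)
    {a b : F} (hab : a ≠ b) {f : ℕ → E → F} (hf : ∀ k, ContDiffOn ℝ 1 (f k) Ω)
    (hlim : Tendsto (fun k ↦ eLpNorm (f k - fun x ↦ if x ∈ D then a else b) 2 (μ.restrict Ω))
      atTop (𝓝 0))
    {N : ℕ} (hN : ∀ k ≥ N, eLpNorm (fderiv ℝ (f k) - fderiv ℝ (f N)) 2 (μ.restrict Ω) ≤ 1)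
    {x₀ : E} (hx₀ : x₀ ∈ Ω) :
    x₀ ∉ (μ.restrict D).support ∨ x₀ ∉ (μ.restrict Dᶜ).support := by
  set g : E → F := fun x ↦ if x ∈ D then a else b
  obtain ⟨r, hr, hrΩ⟩ := nhds_basis_closedBall.mem_iff.1 (hΩ.mem_nhds hx₀)
  have hBΩ : ball x₀ r ⊆ Ω := ball_subset_closedBall.trans hrΩ
  obtain ⟨C, hC, hCk⟩ :=
    exists_forall_ge_eLpNorm_fderiv_restrict_le μ hΩ (isCompact_closedBall x₀ r) hrΩ hf hN
  -- Radii: `2r/3 + r/3 = r` keeps the segments inside `ball x₀ r`; the chaining lemma needs the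
  -- bound on the ball of twice the radius `r/3`; points of `ball x₀ (r/6)` differ by `< r/3`.
  have htrans : ∀ h : E, ‖h‖ ≤ r / 3 →
      eLpNorm (fun x ↦ g (x + h) - g x) 2 (μ.restrict (ball x₀ (2 * (r / 3)))) ≤ C * ‖h‖ₑ := by
    intro h hh
    refine eLpNorm_comp_add_sub_le_of_tendsto μ measurableSet_ball isOpen_ball
      (fun k ↦ (hf k).mono hBΩ)
      (stronglyMeasurable_const.ite hD stronglyMeasurable_const).aestronglyMeasurable
      (tendsto_of_tendsto_of_tendsto_of_le_of_le tendsto_const_nhds hlim (fun _ ↦ zero_le)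
        fun _ ↦ eLpNorm_mono_measure _ (Measure.restrict_mono hBΩ le_rfl))
      (eventually_atTop.2 ⟨N, fun k hk ↦ (eLpNorm_mono_measure _
        (Measure.restrict_mono ball_subset_closedBall le_rfl)).trans (hCk k hk)⟩) ?_
    intro x hx τ hτ
    refine ball_subset_ball (by linarith) (add_mem_ball_of_norm_le (δ := r / 3) hx ?_)
    rw [norm_smul, Real.norm_of_nonneg hτ.1]
    exact (mul_le_of_le_one_left (norm_nonneg h) hτ.2).trans hh
  have hquad (h : E) (hh : ‖h‖ ≤ r / 3) :
      μ (D ∆ ((· + h) ⁻¹' D) ∩ ball x₀ (2 * (r / 3))) ≤ C ^ 2 / ‖a - b‖ₑ ^ 2 * ‖h‖ₑ ^ 2 :=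
    (measure_symmDiff_preimage_add_inter_le μ hD hab (htrans h hh)).trans_eq
      (by rw [mul_pow, ENNReal.mul_div_right_comm])
  have hK : C ^ 2 / ‖a - b‖ₑ ^ 2 ≠ ∞ :=
    ENNReal.div_ne_top (ENNReal.pow_ne_top hC) (pow_ne_zero 2 (enorm_ne_zero.2 (sub_ne_zero.2 hab)))
  refine notMem_support_restrict_or_notMem_support_restrict_compl_of_measure_symmDiff μ hD
    (by positivity : 0 < r / 6) fun h hh ↦
      measure_mono_null (inter_subset_inter_right _ (ball_subset_ball (by linarith)))
        (measure_symmDiff_preimage_add_inter_ball_eq_zero_of_le_mul_sq μ hK hquad (by linarith))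

end Analysis

/-- Corollary 3.1, Euclidean formulation: a two-valued step function on a nonempty connected
open set `Ω ⊆ ℝⁿ`, taking distinct values `a` on `D` and `b` on `Ω \ D` with both pieces of
positive Lebesgue measure, is not in `W^{1,2}(Ω)`: there is no sequence of `C¹` functions on
`Ω` converging to it in `L²(Ω)` whose gradients are Cauchy in `L²(Ω)`. -/
theorem no_step_function_in_W12 (n : ℕ)
    (Ω : Set (EuclideanSpace ℝ (Fin n))) (hΩopen : IsOpen Ω) (hΩconn : IsConnected Ω)
    (D : Set (EuclideanSpace ℝ (Fin n))) (hDmeas : MeasurableSet D) (hDΩ : D ⊆ Ω)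
    (hDpos : 0 < volume D) (hDcpos : 0 < volume (Ω \ D))
    (a b : ℝ) (hab : a ≠ b) :
    ¬ ∃ f : ℕ → EuclideanSpace ℝ (Fin n) → ℝ,
      (∀ k, ContDiffOn ℝ 1 (f k) Ω) ∧
      Tendsto (fun k =>
          ∫⁻ p in Ω, ENNReal.ofReal ((f k p - (if p ∈ D then a else b)) ^ 2))
        atTop (nhds 0) ∧
      (∀ ε > (0:ℝ), ∃ N, ∀ k ≥ N, ∀ j ≥ N,
        (∫⁻ p in Ω, ENNReal.ofReal (‖fderiv ℝ (f k) p - fderiv ℝ (f j) p‖ ^ 2))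
          < ENNReal.ofReal ε) := by
  rintro ⟨f, hf, hlim, hcauchy⟩
  have hlim' : Tendsto (fun k ↦ eLpNorm (f k - fun p ↦ if p ∈ D then a else b) 2
      (volume.restrict Ω)) atTop (𝓝 0) := by
    refine tendsto_nhds_zero_of_tendsto_sq ?_
    simpa only [← lintegral_ofReal_norm_sq, Pi.sub_apply, Real.norm_eq_abs, sq_abs] using hlim
  obtain ⟨N, hN⟩ := hcauchy 1 one_pos
  have hN' : ∀ k ≥ N,
      eLpNorm (fderiv ℝ (f k) - fderiv ℝ (f N)) 2 (volume.restrict Ω) ≤ 1 := fun k hk ↦ by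
    rw [← ENNReal.pow_le_pow_left_iff two_ne_zero, ← lintegral_ofReal_norm_sq, one_pow]
    exact (hN k hk N le_rfl).le.trans_eq ENNReal.ofReal_one
  rcases hΩconn.isPreconnected.measure_inter_eq_zero_or_measure_diff_eq_zero fun x hx ↦
    notMem_support_restrict_or_notMem_support_restrict_compl_of_tendsto volume hΩopen hDmeas
      hab hf hlim' hN' hx with h | h
  · exact hDpos.ne' (by rwa [inter_eq_right.2 hDΩ] at h)
  · exact hDcpos.ne' h
end
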